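/- arXiv:math/0002023 — 4 statements merged into one kernel-verified Lean document; each statement's English description precedes it below -/
import Mathlib

section
/- Let O be a nonempty bounded open simply connected subset of ℝ² with connected boundary ∂O. Let A denote the Lebesgue measure (area) of O and L the one-dimensional Hausdorff measure of ∂O, and assume 0 < A and 0 < L < ∞. Then O contains an open ball of radius 2A/(25πL), and O is contained in a closed ball of radius L. In particular the inradius of O is bounded below and the circumradius of O is bounded above by quantities depending only on A and L. -/
/-!
The boundary `∂O` is connected, and `dist x₀` maps a connected set onto an interval without
increasing `μH[1]`; hence `∂O` has diameter at most `L`. Every point of the bounded set `O` lies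
on a ray from a boundary point `x₀` that leaves `O` through `∂O` further out, so `O ⊆ B̄(x₀, L)`.

If `O` contains no ball of radius `ε`, every point of `O` is within `ε` of `∂O`. A maximal
`ε`-separated subset of `∂O` is an `ε`-net of `∂O`; the disjoint `ε/2`-balls around its points
each carry length at least `ε/2` of the connected boundary, so it has at most `2L/ε` points, and
the `2ε`-balls around them cover `O`. Thus `A ≤ 8πεL`, which fails for `ε = 2A/(25πL)`.
-/

open MeasureTheory Metric Set
open scoped ENNReal NNReal

theorem IsPreconnected.inter_frontier_nonempty {X : Type*} [TopologicalSpace X] {s t : Set X}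
    (ht : IsPreconnected t) (hts : (t ∩ s).Nonempty) (hts' : (t \ s).Nonempty) :
    (t ∩ frontier s).Nonempty := by
  by_contra h
  have hsub : t ⊆ interior s ∪ (closure s)ᶜ := fun z hz => by
    by_contra hz'
    simp only [mem_union, mem_compl_iff, not_or, not_not] at hz'
    exact h ⟨z, hz, hz'.2, hz'.1⟩
  rcases ht.subset_or_subset isOpen_interior isClosed_closure.isOpen_compl
      (disjoint_compl_right.mono_left (interior_subset.trans subset_closure)) hsub with h' | h'
  · obtain ⟨z, hzt, hzs⟩ := hts'
    exact hzs (interior_subset (h' hzt))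
  · obtain ⟨z, hzt, hzs⟩ := hts
    exact h' hzt (subset_closure hzs)

theorem IsCompact.packingNumber_ne_top {X : Type*} [PseudoEMetricSpace X] {s : Set X}
    (hs : IsCompact s) {ε : ℝ≥0} (hε : ε ≠ 0) : packingNumber ε s ≠ ⊤ := by
  obtain ⟨N, -, hNfin, hN⟩ := exists_finite_isCover_of_isCompact (ε := ε / 2) (by simpa) hs
  refine ne_top_of_le_ne_top (hNfin.encard_lt_top.ne) ?_
  calc packingNumber ε s = packingNumber (2 * (ε / 2)) s := by
        rw [mul_div_cancel₀ _ two_ne_zero]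
    _ ≤ externalCoveringNumber (ε / 2) s := packingNumber_two_mul_le_externalCoveringNumber _ _
    _ ≤ N.encard := hN.externalCoveringNumber_le_encard

section HausdorffLength

variable {X : Type*} [MetricSpace X] [MeasurableSpace X] [BorelSpace X] {s : Set X}

theorem IsPreconnected.ofReal_le_hausdorffMeasure_inter_closedBall (hs : IsPreconnected s)
    {x y : X} (hx : x ∈ s) (hy : y ∈ s) {r : ℝ} (hr : r ≤ dist x y) :
    ENNReal.ofReal r ≤ μH[1] (s ∩ closedBall x r) := by
  have hlip : LipschitzWith 1 (dist x) := LipschitzWith.dist_right x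
  have hIcc : Icc 0 r ⊆ dist x '' (s ∩ closedBall x r) := by
    rintro t ⟨ht0, htr⟩
    obtain ⟨z, hz, rfl⟩ := (hs.image _ hlip.continuous.continuousOn).ordConnected.out
      ⟨x, hx, dist_self x⟩ ⟨y, hy, rfl⟩ ⟨ht0, htr.trans hr⟩
    exact ⟨z, ⟨hz, by rwa [mem_closedBall, dist_comm]⟩, rfl⟩
  calc ENNReal.ofReal r = μH[1] (Icc 0 r) := by
        rw [hausdorffMeasure_real, Real.volume_Icc, sub_zero]
    _ ≤ μH[1] (dist x '' (s ∩ closedBall x r)) := measure_mono hIcc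
    _ ≤ μH[1] (s ∩ closedBall x r) := by
        simpa using hlip.hausdorffMeasure_image_le zero_le_one _

theorem IsPreconnected.ediam_le_hausdorffMeasure (hs : IsPreconnected s) :
    ediam s ≤ μH[1] s :=
  ediam_le fun _ hx _ hy => by
    rw [edist_dist]
    exact (hs.ofReal_le_hausdorffMeasure_inter_closedBall hx hy le_rfl).trans
      (measure_mono inter_subset_left)

theorem IsPreconnected.subset_closedBall_toReal_hausdorffMeasure (hs : IsPreconnected s) {x : X}
    (hx : x ∈ s) (hfin : μH[1] s ≠ ⊤) : s ⊆ closedBall x (μH[1] s).toReal := fun y hy => by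
  rw [mem_closedBall, dist_edist]
  exact ENNReal.toReal_mono hfin ((edist_le_ediam_of_mem hy hx).trans hs.ediam_le_hausdorffMeasure)

theorem IsPreconnected.encard_mul_le_hausdorffMeasure (hs : IsPreconnected s) {ε : ℝ≥0}
    {C : Set X} (hCs : C ⊆ s) (hC : IsSeparated ε C) (hCfin : C.Finite) (hC2 : C.Nontrivial) :
    (C.encard : ℝ≥0∞) * (ε / 2) ≤ μH[1] s := by
  have hsep : ∀ a ∈ C, ∀ b ∈ C, a ≠ b → (ε : ℝ) < dist a b := fun a ha b hb hab => by
    have : (ε : ℝ≥0∞) < edist a b := hC ha hb hab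
    rwa [edist_dist, ENNReal.lt_ofReal_iff_toReal_lt ENNReal.coe_ne_top,
      ENNReal.coe_toReal] at this
  have hdisj : C.PairwiseDisjoint fun c => closedBall c (ε / 2) := by
    refine fun a ha b hb hab => disjoint_left.2 fun z (hza : dist z a ≤ ε / 2)
      (hzb : dist z b ≤ ε / 2) => ?_
    linarith [hsep a ha b hb hab, dist_triangle_left a b z]
  have hball : ∀ c ∈ C, (ε : ℝ≥0∞) / 2 ≤ μH[1] (s ∩ closedBall c (ε / 2)) := by
    intro c hc
    obtain ⟨d, hd, hdc⟩ := hC2.exists_ne c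
    convert hs.ofReal_le_hausdorffMeasure_inter_closedBall (hCs hc) (hCs hd)
      (by linarith [ε.coe_nonneg, hsep c hc d hd hdc.symm] : (ε : ℝ) / 2 ≤ dist c d) using 1
    rw [ENNReal.ofReal_div_of_pos two_pos, ENNReal.ofReal_coe_nnreal, ENNReal.ofReal_ofNat]
  calc (C.encard : ℝ≥0∞) * (ε / 2) = ∑' _ : C, (ε : ℝ≥0∞) / 2 :=
        (ENNReal.tsum_set_const _ _).symm
    _ ≤ ∑' c : C, μH[1] (s ∩ closedBall c (ε / 2)) :=
        ENNReal.tsum_le_tsum fun c => hball c c.2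
    _ = μH[1].restrict s (⋃ c ∈ C, closedBall c (ε / 2)) := by
        rw [measure_biUnion hCfin.countable hdisj fun _ _ => measurableSet_closedBall]
        simp only [Measure.restrict_apply measurableSet_closedBall, inter_comm]
    _ ≤ μH[1] s := (measure_mono (subset_univ _)).trans_eq (Measure.restrict_apply_univ s)

theorem IsPreconnected.exists_finite_isCover_encard_mul_le (hs : IsPreconnected s)
    (hsc : IsCompact s) {ε : ℝ≥0} (hε : ε ≠ 0) (hεs : (ε : ℝ≥0∞) / 2 ≤ μH[1] s) :
    ∃ C ⊆ s, C.Finite ∧ IsCover ε s C ∧ (C.encard : ℝ≥0∞) * (ε / 2) ≤ μH[1] s := by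
  have hpack := hsc.packingNumber_ne_top hε
  have hfin : (maximalSeparatedSet ε s).Finite := by
    rw [← encard_ne_top_iff, encard_maximalSeparatedSet hpack]
    exact hpack
  refine ⟨_, maximalSeparatedSet_subset, hfin, isCover_maximalSeparatedSet hpack, ?_⟩
  rcases (maximalSeparatedSet ε s).subsingleton_or_nontrivial with h | h
  · calc ((maximalSeparatedSet ε s).encard : ℝ≥0∞) * (ε / 2) ≤ 1 * (ε / 2) := by
          gcongr
          exact_mod_cast encard_le_one_iff_subsingleton.2 h
      _ ≤ μH[1] s := by rwa [one_mul]
  · exact hs.encard_mul_le_hausdorffMeasure maximalSeparatedSet_subset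
      isSeparated_maximalSeparatedSet hfin h

end HausdorffLength

section NormedSpace
variable {E : Type*} [NormedAddCommGroup E] [NormedSpace ℝ E] {O : Set E}

theorem Bornology.IsBounded.subset_closedBall_of_frontier_subset (hO : Bornology.IsBounded O)
    {x : E} {R : ℝ} (hR : 0 ≤ R) (h : frontier O ⊆ closedBall x R) : O ⊆ closedBall x R := by
  intro y hy
  rcases eq_or_ne y x with rfl | hyx
  · exact mem_closedBall_self hR
  have hd : 0 < dist x y := dist_pos.2 hyx.symm
  let ray : ℝ → E := fun t => x + t • (y - x)
  have hray : ∀ t, 0 ≤ t → dist x (ray t) = t * dist x y := fun t ht => by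
    rw [dist_self_add_right, norm_smul, Real.norm_of_nonneg ht, ← dist_eq_norm, dist_comm]
  obtain ⟨R', hR'⟩ := hO.subset_closedBall x
  set t₀ := (|R'| + 1) / dist x y + 1
  have ht₀ : 1 ≤ t₀ := le_add_of_nonneg_left (by positivity)
  have hfar : ray t₀ ∉ O := fun hmem => by
    have h1 : dist x (ray t₀) ≤ R' := by rw [dist_comm]; exact hR' hmem
    rw [hray t₀ (by linarith), add_mul, div_mul_cancel₀ _ hd.ne'] at h1
    linarith [le_abs_self R']
  obtain ⟨_, ⟨t, ht, rfl⟩, hf⟩ :=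
    (isPreconnected_Ici.image ray (by fun_prop)).inter_frontier_nonempty
    ⟨y, ⟨1, self_mem_Ici, by simp [ray]⟩, hy⟩ ⟨ray t₀, ⟨t₀, ht₀, rfl⟩, hfar⟩
  calc dist y x = dist x y := dist_comm y x
    _ ≤ t * dist x y := le_mul_of_one_le_left hd.le ht
    _ = dist x (ray t) := (hray t (zero_le_one.trans ht)).symm
    _ ≤ R := by rw [dist_comm]; exact h hf

theorem subset_iUnion_ball_of_isCover_frontier [FiniteDimensional ℝ E] {ε : ℝ≥0} {C : Set E}
    (hO : ∀ c, ¬ ball c ε ⊆ O) (hC : IsCover ε (frontier O) C) :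
    O ⊆ ⋃ c ∈ C, ball c (2 * ε) := by
  intro y hy
  obtain ⟨f, hf, hyf⟩ :=
    exists_mem_frontier_infDist_compl_eq_dist hy fun h => hO y (h ▸ subset_univ _)
  have hlt : infDist y Oᶜ < ε :=
    not_le.1 fun h => hO y ((ball_subset_ball h).trans ball_infDist_compl_subset)
  obtain ⟨c, hc, hfc⟩ := mem_iUnion₂.1 (hC.subset_iUnion_closedBall hf)
  exact mem_biUnion hc
    (show dist y c < 2 * ε by linarith [dist_triangle y f c, mem_closedBall.1 hfc])

end NormedSpace

theorem volume_le_of_forall_not_ball_subset {O : Set (EuclideanSpace ℝ (Fin 2))}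
    (hbd : Bornology.IsBounded O) (hconn : IsPreconnected (frontier O)) {ε : ℝ≥0} (hε : ε ≠ 0)
    (hεO : (ε : ℝ≥0∞) / 2 ≤ μH[1] (frontier O)) (hO : ∀ c, ¬ ball c ε ⊆ O) :
    volume O ≤ 8 * ENNReal.ofReal Real.pi * ε * μH[1] (frontier O) := by
  obtain ⟨C, -, hCfin, hCcov, hCcard⟩ := hconn.exists_finite_isCover_encard_mul_le
    (hbd.isCompact_closure.of_isClosed_subset isClosed_frontier frontier_subset_closure) hε hεO
  have h8 : (8 : ℝ≥0∞) * (ε / 2) = 4 * ε := by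
    rw [show (8 : ℝ≥0∞) = 4 * 2 by norm_num, mul_assoc,
      ENNReal.mul_div_cancel two_ne_zero ENNReal.ofNat_ne_top]
  calc volume O ≤ volume (⋃ c ∈ C, ball c (2 * ε)) :=
        measure_mono (subset_iUnion_ball_of_isCover_frontier hO hCcov)
    _ ≤ ∑' c : C, volume (ball (c : EuclideanSpace ℝ (Fin 2)) (2 * ε)) :=
        measure_biUnion_le _ hCfin.countable _
    _ = 8 * ENNReal.ofReal Real.pi * ε * (C.encard * (ε / 2)) := by
        simp only [EuclideanSpace.volume_ball_fin_two, ENNReal.tsum_set_const]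
        rw [ENNReal.ofReal_mul zero_le_two, ENNReal.ofReal_ofNat, ENNReal.ofReal_coe_nnreal,
          show 8 * ENNReal.ofReal Real.pi * ε * (C.encard * (ε / 2)) =
            ENNReal.ofReal Real.pi * ε * C.encard * (8 * (ε / 2)) by ring, h8]
        ring
    _ ≤ 8 * ENNReal.ofReal Real.pi * ε * μH[1] (frontier O) := by gcongr

theorem inradius_circumradius_bound_general
    (O : Set (EuclideanSpace ℝ (Fin 2)))
    (hbd : Bornology.IsBounded O)
    (hconn : IsConnected (frontier O))
    (A L : ℝ)
    (hA : A = (volume O).toReal)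
    (hL : L = (μH[1] (frontier O)).toReal)
    (hLfin : μH[1] (frontier O) < ⊤)
    (hA0 : 0 < A) (hL0 : 0 < L) :
    (∃ c, Metric.ball c (2 * A / (25 * Real.pi * L)) ⊆ O) ∧
    (∃ c, O ⊆ Metric.closedBall c L) := by
  obtain ⟨x₀, hx₀⟩ := hconn.nonempty
  have hcirc : O ⊆ closedBall x₀ L := hbd.subset_closedBall_of_frontier_subset hL0.le <| by
    rw [hL]; exact hconn.isPreconnected.subset_closedBall_toReal_hausdorffMeasure hx₀ hLfin.ne
  refine ⟨?_, x₀, hcirc⟩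
  have hAL : A ≤ L ^ 2 * Real.pi := by
    have := measure_mono (μ := volume) hcirc
    rw [EuclideanSpace.volume_closedBall_fin_two, ← ENNReal.ofReal_pow hL0.le,
      ← ENNReal.ofReal_mul (by positivity)] at this
    rw [hA]; exact ENNReal.toReal_le_of_le_ofReal (by positivity) this
  by_contra! hno
  set ε : ℝ≥0 := ⟨2 * A / (25 * Real.pi * L), by positivity⟩
  have hεr : (ε : ℝ) = 2 * A / (25 * Real.pi * L) := rfl
  have hε0 : ε ≠ 0 := by rw [← NNReal.coe_ne_zero, hεr]; positivity
  have hε : (ε : ℝ) * (25 * Real.pi * L) = 2 * A := by rw [hεr]; field_simp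
  have hεL : (ε : ℝ≥0∞) / 2 ≤ μH[1] (frontier O) := by
    rw [← ENNReal.ofReal_toReal hLfin.ne, ← hL, ENNReal.le_ofReal_iff_toReal_le (by finiteness)
      hL0.le]
    simp only [ENNReal.toReal_div, ENNReal.coe_toReal, ENNReal.toReal_ofNat]
    nlinarith [Real.pi_pos]
  have hvol := ENNReal.toReal_mono (by finiteness)
    (volume_le_of_forall_not_ball_subset hbd hconn.isPreconnected hε0 hεL hno)
  simp only [ENNReal.toReal_mul, ENNReal.toReal_ofNat, ENNReal.toReal_ofReal Real.pi_pos.le,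
    ENNReal.coe_toReal, ← hA, ← hL] at hvol
  -- `8πεL = 16A/25`
  nlinarith [Real.pi_pos]

/-- An obstacle with given area `A` and perimeter `L` contains a ball of radius
`2A/(25πL)` and is contained in a closed ball of radius `L`. -/
theorem inradius_circumradius_bound
    (O : Set (EuclideanSpace ℝ (Fin 2)))
    (hO : IsOpen O) (hne : O.Nonempty) (hbd : Bornology.IsBounded O)
    (hsc : SimplyConnectedSpace O) (hconn : IsConnected (frontier O))
    (A L : ℝ)
    (hA : A = (volume O).toReal)
    (hL : L = (μH[1] (frontier O)).toReal)
    (hLfin : μH[1] (frontier O) < ⊤)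
    (hA0 : 0 < A) (hL0 : 0 < L) :
    (∃ c, Metric.ball c (2 * A / (25 * Real.pi * L)) ⊆ O) ∧
    (∃ c, O ⊆ Metric.closedBall c L) :=
  inradius_circumradius_bound_general O hbd hconn A L hA hL hLfin hA0 hL0
end

section
/- Let χ : [0,∞) → ℝ be smooth with χ ≡ 1 on a neighborhood of 0 and χ(λ) = 0 for all λ ≥ λ₁, for some λ₁ < 1. Let s : (0,1) → ℝ be continuous, bounded, and suppose there exist C > 0 and λ₀ ∈ (0,1) such that |s(λ) − π/log(1/λ)| ≤ C (1/log(1/λ))² for all 0 < λ < λ₀. For σ < 0 define Z(σ) := −(σ/π) ∫₀^1 λ^{−2σ} s(λ) χ(λ) dλ/λ. Then the limit lim_{σ→0⁻} ( Z(σ)/σ − log(−σ) ) exists; equivalently, there exists a₂ ∈ ℝ such that Z(σ) = σ log(−σ) + a₂ σ + o(σ) as σ → 0⁻. -/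
open MeasureTheory Filter Set Real

private lemma cont_const_rpow {δ : ℝ} (hδ : 0 < δ) : Continuous (fun τ : ℝ => δ ^ τ) := by
  have h : (fun τ : ℝ => δ ^ τ) = fun τ => Real.exp (Real.log δ * τ) := by
    funext τ; rw [Real.rpow_def_of_pos hδ]
  rw [h]; exact Real.continuous_exp.comp (continuous_const.mul continuous_id)

private lemma tendsto_rpow_exp {l : ℝ} (hl : 0 < l) :
    Filter.Tendsto (fun σ : ℝ => l ^ (-2*σ)) (nhdsWithin 0 (Set.Iio 0)) (nhds 1) := by
  have h : Continuous (fun σ : ℝ => l ^ (-2*σ)) :=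
    (cont_const_rpow hl).comp (continuous_const.mul continuous_id)
  have h2 : Filter.Tendsto (fun σ : ℝ => l ^ (-2*σ)) (nhdsWithin 0 (Set.Iio 0))
      (nhds (l ^ (-2*(0:ℝ)))) := (h.tendsto 0).mono_left nhdsWithin_le_nhds
  simpa using h2

private lemma integral_Ioo_rpow {δ c : ℝ} (hδ : 0 < δ) (hc : 0 < c) :
    ∫ l in Set.Ioo (0:ℝ) δ, l ^ (c - 1) = δ ^ c / c := by
  rw [← MeasureTheory.integral_Ioc_eq_integral_Ioo, ← intervalIntegral.integral_of_le hδ.le,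
    integral_rpow (Or.inl (by linarith))]
  have h : c - 1 + 1 = c := by ring
  rw [h, Real.zero_rpow hc.ne', sub_zero]

private lemma integrableOn_one_div_mul_log_sq {δ : ℝ} (h0 : 0 < δ) (h1 : δ < 1) :
    MeasureTheory.IntegrableOn (fun l : ℝ => 1 / (l * Real.log (1/l) ^ 2)) (Set.Ioo 0 δ) := by
  have key : MeasureTheory.IntegrableOn (fun l : ℝ => 1 / (l * Real.log l ^ 2))
      (Set.Ioc 0 δ) := by
    apply intervalIntegral.integrableOn_deriv_of_nonneg (g := fun l : ℝ => -(Real.log l)⁻¹)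
    · intro x hx
      rcases eq_or_lt_of_le hx.1 with h | h
      · have htd : Tendsto (fun l : ℝ => -(Real.log l)⁻¹) (nhdsWithin 0 (Set.Ioi 0)) (nhds 0) := by
          have h2 : Tendsto (fun l : ℝ => -Real.log l) (nhdsWithin 0 (Set.Ioi 0)) atTop :=
            tendsto_neg_atBot_atTop.comp Real.tendsto_log_nhdsGT_zero
          have h3 := h2.inv_tendsto_atTop
          refine h3.congr fun l => ?_
          exact inv_neg
        have hIci : Set.Ici (0:ℝ) = {0} ∪ Set.Ioi 0 := by
          ext y; simp [le_iff_lt_or_eq, or_comm, eq_comm]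
        have hval : -(Real.log (0:ℝ))⁻¹ = 0 := by simp
        have htp : Tendsto (fun l : ℝ => -(Real.log l)⁻¹) (nhdsWithin 0 (Set.Ici 0)) (nhds 0) := by
          rw [hIci, nhdsWithin_union, nhdsWithin_singleton, tendsto_sup]
          constructor
          · simpa [hval] using tendsto_pure_nhds (fun l : ℝ => -(Real.log l)⁻¹) 0
          · exact htd
        have goal : Tendsto (fun l : ℝ => -(Real.log l)⁻¹) (nhdsWithin 0 (Set.Icc 0 δ))
            (nhds (-(Real.log (0:ℝ))⁻¹)) := by
          rw [hval]; exact htp.mono_left (nhdsWithin_mono (0:ℝ) Set.Icc_subset_Ici_self)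
        rw [← h]; exact goal
      · exact (((Real.continuousAt_log (ne_of_gt h)).inv₀
          (ne_of_lt (Real.log_neg h (lt_of_le_of_lt hx.2 h1)))).neg).continuousWithinAt
    · intro x hx
      have hx0 : x ≠ 0 := ne_of_gt hx.1
      have hlog : Real.log x ≠ 0 := ne_of_lt (Real.log_neg hx.1 (lt_trans hx.2 h1))
      have h := ((Real.hasDerivAt_log hx0).inv hlog).neg
      refine h.congr_deriv (Eq.symm ?_)
      field_simp
    · intro x hx
      have hlog : Real.log x ≠ 0 := ne_of_lt (Real.log_neg hx.1 (lt_trans hx.2 h1))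
      have h2 : 0 < Real.log x ^ 2 := lt_of_le_of_ne (sq_nonneg _) (Ne.symm (pow_ne_zero 2 hlog))
      exact le_of_lt (div_pos one_pos (mul_pos hx.1 h2))
  have key2 := key.mono_set Set.Ioo_subset_Ioc_self
  apply key2.congr_fun _ measurableSet_Ioo
  intro l hl
  simp [Real.log_inv]


private lemma contG {δ σ : ℝ} (h1 : δ < 1) :
    ContinuousOn (fun l : ℝ => l ^ (-2*σ - 1) / Real.log (1/l)) (Set.Ioo 0 δ) := by
  apply ContinuousOn.div
  · intro l hl
    exact (Real.continuousAt_rpow_const l _ (Or.inl (ne_of_gt hl.1))).continuousWithinAt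
  · apply ContinuousOn.log
    · exact continuousOn_const.div continuousOn_id (fun l hl => ne_of_gt hl.1)
    · intro l hl
      exact ne_of_gt (lt_trans one_pos (one_lt_one_div hl.1 (lt_trans hl.2 h1)))
  · intro l hl
    exact ne_of_gt (Real.log_pos (one_lt_one_div hl.1 (lt_trans hl.2 h1)))

private lemma intG {δ σ : ℝ} (h0 : 0 < δ) (h1 : δ < 1) (hσ : σ < 0) :
    MeasureTheory.IntegrableOn (fun l : ℝ => l ^ (-2*σ - 1) / Real.log (1/l))
      (Set.Ioo 0 δ) := by
  have hbase : MeasureTheory.IntegrableOn (fun l : ℝ => l ^ (-2*σ - 1)) (Set.Ioo 0 δ) :=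
    (intervalIntegral.integrableOn_Ioo_rpow_iff h0).mpr (by linarith)
  apply Integrable.mono' (hbase.mul_const (Real.log (1/δ))⁻¹)
    ((contG h1).aestronglyMeasurable measurableSet_Ioo)
  rw [ae_restrict_iff' measurableSet_Ioo]
  apply ae_of_all
  intro l hl
  have hl1 : l < 1 := lt_trans hl.2 h1
  have hlogδ : 0 < Real.log (1/δ) := Real.log_pos (one_lt_one_div h0 h1)
  have hlogl : 0 < Real.log (1/l) := Real.log_pos (one_lt_one_div hl.1 hl1)
  have hle : Real.log (1/δ) ≤ Real.log (1/l) :=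
    Real.log_le_log (by positivity) (one_div_le_one_div_of_le hl.1 hl.2.le)
  rw [Real.norm_eq_abs, abs_of_nonneg (div_nonneg (Real.rpow_nonneg hl.1.le _) hlogl.le)]
  rw [div_eq_mul_inv]
  exact mul_le_mul_of_nonneg_left (inv_anti₀ hlogδ hle) (Real.rpow_nonneg hl.1.le _)

private lemma derivG {δ : ℝ} (h0 : 0 < δ) (h1 : δ < 1) {σ₀ : ℝ} (hσ₀ : σ₀ < 0) :
    HasDerivAt (fun σ : ℝ => ∫ l in Set.Ioo (0:ℝ) δ, l ^ (-2*σ - 1) / Real.log (1/l))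
      (-δ ^ (-2*σ₀) / σ₀) σ₀ := by
  have hε : (0:ℝ) < -σ₀/2 := by linarith
  have key := hasDerivAt_integral_of_dominated_loc_of_deriv_le (μ := volume.restrict (Set.Ioo 0 δ))
    (F := fun σ l => l ^ (-2*σ - 1) / Real.log (1/l))
    (F' := fun σ l => 2 * l ^ (-2*σ - 1))
    (bound := fun l => 2 * l ^ (-σ₀ - 1)) (Metric.ball_mem_nhds σ₀ hε)
    (Filter.Eventually.of_forall fun σ => (contG h1).aestronglyMeasurable measurableSet_Ioo)
    (intG h0 h1 hσ₀)
    (by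
      apply ContinuousOn.aestronglyMeasurable _ measurableSet_Ioo
      exact continuousOn_const.mul (fun l hl =>
        (Real.continuousAt_rpow_const l _ (Or.inl (ne_of_gt hl.1))).continuousWithinAt))
    (by
      rw [ae_restrict_iff' measurableSet_Ioo]
      apply ae_of_all
      intro l hl σ hσ
      have hl1 : l < 1 := lt_trans hl.2 h1
      have hσle : -σ₀ - 1 ≤ -2*σ - 1 := by
        rw [Metric.mem_ball, Real.dist_eq] at hσ
        have := abs_lt.mp hσ
        linarith [this.1, this.2]
      rw [Real.norm_eq_abs, abs_of_nonneg (mul_nonneg (by norm_num) (Real.rpow_nonneg hl.1.le _))]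
      exact mul_le_mul_of_nonneg_left
        (Real.rpow_le_rpow_of_exponent_ge hl.1 hl1.le hσle) (by norm_num))
    (((intervalIntegral.integrableOn_Ioo_rpow_iff h0).mpr (by linarith : (-1:ℝ) < -σ₀ - 1)).const_mul 2)
    (by
      rw [ae_restrict_iff' measurableSet_Ioo]
      apply ae_of_all
      intro l hl σ hσ
      have hl1 : l < 1 := lt_trans hl.2 h1
      have hlogl : Real.log l < 0 := Real.log_neg hl.1 hl1
      have hout := (Real.hasStrictDerivAt_const_rpow hl.1 (-2*σ - 1)).hasDerivAt
      have hin : HasDerivAt (fun σ : ℝ => -2*σ - 1) (-2) σ := by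
        simpa using ((hasDerivAt_id σ).const_mul (-2:ℝ)).sub_const 1
      have hcomp := HasDerivAt.comp σ hout hin
      have hdiv := hcomp.div_const (Real.log (1/l))
      refine hdiv.congr_deriv (Eq.symm ?_)
      rw [one_div, Real.log_inv]
      field_simp [ne_of_lt hlogl])
  have heq : ∫ l in Set.Ioo (0:ℝ) δ, 2 * l ^ (-2*σ₀ - 1) = -δ ^ (-2*σ₀) / σ₀ := by
    rw [MeasureTheory.integral_const_mul]
    have : ∫ l in Set.Ioo (0:ℝ) δ, l ^ (-2*σ₀ - 1) = δ ^ (-2*σ₀) / (-2*σ₀) :=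
      integral_Ioo_rpow h0 (by linarith)
    rw [this]
    field_simp
  rw [← heq]
  exact key.2



private lemma G_limit {δ : ℝ} (h0 : 0 < δ) (h1 : δ < 1) :
    ∃ L : ℝ, Filter.Tendsto
      (fun σ : ℝ => (∫ l in Set.Ioo (0:ℝ) δ, l ^ (-2*σ - 1) / Real.log (1/l)) + Real.log (-σ))
      (nhdsWithin 0 (Set.Iio 0)) (nhds L) := by
  set G : ℝ → ℝ := fun σ => ∫ l in Set.Ioo (0:ℝ) δ, l ^ (-2*σ - 1) / Real.log (1/l) with hGdef
  set b : ℝ := -Real.log δ with hb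
  have hbpos : 0 < b := by rw [hb]; simpa using Real.log_neg h0 h1
  set σ₁ : ℝ := -(1/(4*b)) with hσ₁def
  have hσ₁neg : σ₁ < 0 := by rw [hσ₁def]; simp; positivity
  set ψ : ℝ → ℝ := fun τ => (1 - δ ^ (-2*τ)) / τ with hψdef
  have hnumcont : Continuous (fun τ : ℝ => 1 - δ ^ (-2*τ)) :=
    continuous_const.sub ((cont_const_rpow h0).comp (continuous_const.mul continuous_id))
  have hψcont : ContinuousOn ψ (Set.Iio 0) :=
    hnumcont.continuousOn.div continuousOn_id (fun τ hτ => ne_of_lt hτ)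
  -- FTC identity
  have hFTC : ∀ σ, σ₁ ≤ σ → σ < 0 →
      G σ + Real.log (-σ) = (G σ₁ + Real.log (-σ₁)) + ∫ τ in σ₁..σ, ψ τ := by
    intro σ hσ₁σ hσ0
    have huIcc : Set.uIcc σ₁ σ = Set.Icc σ₁ σ := Set.uIcc_of_le hσ₁σ
    have hderiv : ∀ τ ∈ Set.uIcc σ₁ σ,
        HasDerivAt (fun τ => G τ + Real.log (-τ)) (ψ τ) τ := by
      intro τ hτ
      rw [huIcc] at hτ
      have hτ0 : τ < 0 := lt_of_le_of_lt hτ.2 hσ0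
      have hneg : HasDerivAt (fun τ : ℝ => -τ) (-1) τ := (hasDerivAt_id τ).neg
      have hlog := (Real.hasDerivAt_log (show -τ ≠ 0 by simpa using ne_of_lt hτ0)).comp τ hneg
      have hsum := (derivG h0 h1 hτ0).add hlog
      refine hsum.congr_deriv (Eq.symm ?_)
      rw [hψdef]
      field_simp
      ring
    have hint : IntervalIntegrable ψ volume σ₁ σ := by
      apply ContinuousOn.intervalIntegrable
      apply hψcont.mono
      rw [huIcc]
      exact fun τ hτ => lt_of_le_of_lt hτ.2 hσ0
    have := intervalIntegral.integral_eq_sub_of_hasDerivAt hderiv hint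
    rw [this]; ring
  -- interval integrability up to 0
  have hψint : IntervalIntegrable ψ volume σ₁ 0 := by
    rw [intervalIntegrable_iff_integrableOn_Ioc_of_le hσ₁neg.le]
    have hψmeas : Measurable ψ := (hnumcont.measurable).div measurable_id
    apply Integrable.mono' (g := fun _ : ℝ => 4 * b)
      (integrableOn_const measure_Ioc_lt_top.ne)
      hψmeas.aestronglyMeasurable
    rw [ae_restrict_iff' measurableSet_Ioc]
    apply ae_of_all
    intro τ hτ
    rcases eq_or_lt_of_le hτ.2 with h | h
    · rw [hψdef]
      simp [h]
      positivity
    · have hτ0 : τ ≠ 0 := ne_of_lt h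
      have habs_τ : |τ| ≤ 1/(4*b) := by
        rw [abs_of_neg h]
        rw [hσ₁def] at hτ
        linarith [hτ.1]
      have hu : δ ^ (-2*τ) = Real.exp (Real.log δ * (-2*τ)) := Real.rpow_def_of_pos h0 _
      have huabs : |Real.log δ * (-2*τ)| = 2 * b * |τ| := by
        rw [abs_mul, abs_of_neg (show Real.log δ < 0 by rw [← neg_pos, ← hb]; exact hbpos)]
        rw [abs_mul, abs_of_nonpos (by norm_num : (-2:ℝ) ≤ 0)]
        rw [← hb]; ring
      have hule : |Real.log δ * (-2*τ)| ≤ 1 := by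
        rw [huabs]
        calc 2 * b * |τ| ≤ 2 * b * (1/(4*b)) := by
              apply mul_le_mul_of_nonneg_left habs_τ (by positivity)
          _ = 1/2 := by field_simp; ring
          _ ≤ 1 := by norm_num
      have hexp := Real.abs_exp_sub_one_le hule
      rw [Real.norm_eq_abs, hψdef]
      simp only
      rw [abs_div, div_le_iff₀ (abs_pos.mpr hτ0)]
      rw [hu, abs_sub_comm]
      calc |Real.exp (Real.log δ * (-2*τ)) - 1| ≤ 2 * |Real.log δ * (-2*τ)| := hexp
        _ = 4 * b * |τ| := by rw [huabs]; ring
  -- continuity of primitive at 0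
  have hprim : ContinuousWithinAt (fun σ => ∫ τ in σ₁..σ, ψ τ) (Set.Icc σ₁ 0) 0 := by
    apply intervalIntegral.continuousWithinAt_primitive (by simp)
    rw [min_self, max_eq_right hσ₁neg.le]
    exact hψint
  have hT : Filter.Tendsto (fun σ => ∫ τ in σ₁..σ, ψ τ) (nhdsWithin 0 (Set.Iio 0))
      (nhds (∫ τ in σ₁..(0:ℝ), ψ τ)) := by
    rw [← nhdsWithin_Ioo_eq_nhdsLT hσ₁neg]
    exact Filter.Tendsto.mono_left hprim (nhdsWithin_mono 0 Set.Ioo_subset_Icc_self)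
  refine ⟨(G σ₁ + Real.log (-σ₁)) + ∫ τ in σ₁..(0:ℝ), ψ τ, ?_⟩
  apply Filter.Tendsto.congr' _ (tendsto_const_nhds.add hT)
  filter_upwards [Ioo_mem_nhdsLT_of_mem (show (0:ℝ) ∈ Set.Ioc σ₁ 0 from ⟨hσ₁neg, le_refl 0⟩)]
  intro σ hσ
  exact (hFTC σ hσ.1.le hσ.2).symm





/-- The zeta-function piece `Z(σ) = -(σ/π) ∫₀^1 λ^{-2σ} s(λ) χ(λ) dλ/λ` has an
expansion `Z(σ) = σ log(-σ) + a₂ σ + o(σ)` as `σ → 0⁻`, whenever the scattering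
phase satisfies `s(λ) = π ilg λ + O((ilg λ)²)` as `λ → 0`. -/
theorem zeta_expansion_exists
    (χ : ℝ → ℝ) (hχ : ContDiff ℝ (⊤ : ℕ∞) χ)
    (hχ0 : ∀ᶠ l in nhds (0 : ℝ), χ l = 1)
    (l₁ : ℝ) (hl₁ : l₁ < 1) (hχ1 : ∀ l ≥ l₁, χ l = 0)
    (s : ℝ → ℝ) (hs : ContinuousOn s (Set.Ioo 0 1))
    (hbdd : ∃ M : ℝ, ∀ l ∈ Set.Ioo (0 : ℝ) 1, |s l| ≤ M)
    (C l₀ : ℝ) (hC : 0 < C) (hl₀ : l₀ ∈ Set.Ioo (0 : ℝ) 1)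
    (hasym : ∀ l ∈ Set.Ioo (0 : ℝ) l₀,
      |s l - Real.pi / Real.log (1 / l)| ≤ C * (1 / Real.log (1 / l)) ^ 2)
    (Z : ℝ → ℝ)
    (hZ : ∀ σ < (0 : ℝ),
      Z σ = -(σ / Real.pi) *
        ∫ l in Set.Ioo (0 : ℝ) 1, l ^ (-2 * σ) * s l * χ l / l) :
    ∃ a₂ : ℝ, Filter.Tendsto (fun σ : ℝ => Z σ / σ - Real.log (-σ))
      (nhdsWithin 0 (Set.Iio 0)) (nhds a₂) := by
  obtain ⟨M, hM⟩ := hbdd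
  have hM0 : 0 ≤ M := le_trans (abs_nonneg _) (hM 2⁻¹ ⟨by norm_num, by norm_num⟩)
  obtain ⟨ε, hεpos, hε⟩ := Metric.eventually_nhds_iff.mp hχ0
  set δ : ℝ := min (min (ε/2) (l₀/2)) 2⁻¹ with hδdef
  have hδpos : 0 < δ :=
    lt_min (lt_min (by positivity) (by have := hl₀.1; positivity)) (by norm_num)
  have hδ1 : δ < 1 := lt_of_le_of_lt (min_le_right _ _) (by norm_num)
  have hδl₀ : δ < l₀ :=
    lt_of_le_of_lt ((min_le_left _ _).trans (min_le_right _ _)) (by linarith [hl₀.1])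
  have hδε : δ < ε :=
    lt_of_le_of_lt ((min_le_left _ _).trans (min_le_left _ _)) (by linarith)
  have hχone : ∀ l ∈ Set.Ioo (0:ℝ) δ, χ l = 1 := by
    intro l hl
    apply hε
    rw [Real.dist_eq, sub_zero, abs_of_pos hl.1]
    exact lt_trans hl.2 hδε
  obtain ⟨Cχ, hCχ⟩ :=
    (isCompact_Icc (a := δ) (b := 1)).exists_bound_of_continuousOn hχ.continuous.continuousOn
  have hCχ0 : 0 ≤ Cχ := le_trans (norm_nonneg _) (hCχ δ ⟨le_refl δ, hδ1.le⟩)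
  -- continuity helpers
  have hsub : Set.Ioo (0:ℝ) δ ⊆ Set.Ioo (0:ℝ) 1 := Set.Ioo_subset_Ioo_right hδ1.le
  have hsub' : Set.Ico δ 1 ⊆ Set.Ioo (0:ℝ) 1 := fun l hl => ⟨lt_of_lt_of_le hδpos hl.1, hl.2⟩
  have hlogne : ∀ l ∈ Set.Ioo (0:ℝ) δ, Real.log (1/l) ≠ 0 := fun l hl =>
    ne_of_gt (Real.log_pos (one_lt_one_div hl.1 (lt_trans hl.2 hδ1)))
  have hlogcont : ContinuousOn (fun l : ℝ => Real.log (1/l)) (Set.Ioo (0:ℝ) δ) :=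
    ContinuousOn.log (continuousOn_const.div continuousOn_id (fun l hl => ne_of_gt hl.1))
      (fun l hl => by have hl0 := hl.1; positivity)
  have hcontA : ∀ σ : ℝ, ContinuousOn
      (fun l : ℝ => l ^ (-2*σ) * ((s l - Real.pi / Real.log (1/l)) / l)) (Set.Ioo 0 δ) := by
    intro σ
    apply ContinuousOn.mul
    · exact fun l hl => (Real.continuousAt_rpow_const l _ (Or.inl (ne_of_gt hl.1))).continuousWithinAt
    · exact ((hs.mono hsub).sub (continuousOn_const.div hlogcont hlogne)).div
        continuousOn_id (fun l hl => ne_of_gt hl.1)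
  have hcontB : ∀ σ : ℝ, ContinuousOn
      (fun l : ℝ => l ^ (-2*σ) * s l * χ l / l) (Set.Ico δ 1) := by
    intro σ
    have haux : ContinuousOn (fun l : ℝ => l ^ (-2*σ)) (Set.Ico δ 1) := fun l hl =>
      (Real.continuousAt_rpow_const l _
        (Or.inl (ne_of_gt (lt_of_lt_of_le hδpos hl.1)))).continuousWithinAt
    apply ContinuousOn.div
    · exact (haux.mul (hs.mono hsub')).mul hχ.continuous.continuousOn
    · exact continuousOn_id
    · exact fun l hl => ne_of_gt (lt_of_lt_of_le hδpos hl.1)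
  -- integrability and bounds
  have hDint : MeasureTheory.IntegrableOn
      (fun l : ℝ => C * (1/(l * Real.log (1/l)^2))) (Set.Ioo 0 δ) :=
    (integrableOn_one_div_mul_log_sq hδpos hδ1).const_mul C
  have hboundA : ∀ σ:ℝ, σ < 0 → ∀ l ∈ Set.Ioo (0:ℝ) δ,
      ‖l ^ (-2*σ) * ((s l - Real.pi / Real.log (1/l)) / l)‖
        ≤ C * (1/(l * Real.log (1/l)^2)) := by
    intro σ hσ l hl
    have hl1 : l < 1 := lt_trans hl.2 hδ1
    have hrle : l ^ (-2*σ) ≤ 1 := Real.rpow_le_one hl.1.le hl1.le (by linarith)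
    have hrnn : (0:ℝ) ≤ l ^ (-2*σ) := Real.rpow_nonneg hl.1.le _
    have hasm := hasym l ⟨hl.1, lt_trans hl.2 hδl₀⟩
    have hlog : Real.log (1/l) ≠ 0 := hlogne l hl
    have hl0 : 0 < l := hl.1
    rw [Real.norm_eq_abs, abs_mul, abs_div, abs_of_pos hl.1]
    have h2 : |s l - Real.pi / Real.log (1/l)| / l ≤ C * (1/(l * Real.log (1/l)^2)) := by
      have h3 : C * (1/(l * Real.log (1/l)^2)) = (C * (1/Real.log (1/l))^2) / l := by
        rw [div_pow, one_pow]
        field_simp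
      rw [h3]
      gcongr
    calc |l ^ (-2*σ)| * (|s l - Real.pi / Real.log (1/l)| / l)
        ≤ 1 * (C * (1/(l * Real.log (1/l)^2))) := by
          apply mul_le_mul _ h2 (by positivity) (by norm_num)
          rw [abs_of_nonneg hrnn]; exact hrle
      _ = C * (1/(l * Real.log (1/l)^2)) := one_mul _
  have intA : ∀ σ:ℝ, σ < 0 → MeasureTheory.IntegrableOn
      (fun l : ℝ => l ^ (-2*σ) * ((s l - Real.pi / Real.log (1/l)) / l)) (Set.Ioo 0 δ) := by
    intro σ hσ
    apply Integrable.mono' hDint ((hcontA σ).aestronglyMeasurable measurableSet_Ioo)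
    rw [ae_restrict_iff' measurableSet_Ioo]
    exact ae_of_all _ (hboundA σ hσ)
  have hboundB : ∀ σ:ℝ, σ < 0 → ∀ l ∈ Set.Ico δ 1,
      ‖l ^ (-2*σ) * s l * χ l / l‖ ≤ M * Cχ / δ := by
    intro σ hσ l hl
    have hl0 : 0 < l := lt_of_lt_of_le hδpos hl.1
    have hrle : l ^ (-2*σ) ≤ 1 := Real.rpow_le_one hl0.le hl.2.le (by linarith)
    have hrnn : (0:ℝ) ≤ l ^ (-2*σ) := Real.rpow_nonneg hl0.le _
    have hsl : |s l| ≤ M := hM l (hsub' hl)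
    have hχl : |χ l| ≤ Cχ := by
      have := hCχ l ⟨hl.1, hl.2.le⟩; rwa [Real.norm_eq_abs] at this
    rw [Real.norm_eq_abs, abs_div, abs_mul, abs_mul, abs_of_pos hl0]
    apply div_le_div₀ (by positivity) _ hδpos hl.1
    calc |l ^ (-2*σ)| * |s l| * |χ l| ≤ 1 * M * Cχ := by
          apply mul_le_mul _ hχl (abs_nonneg _) (by positivity)
          apply mul_le_mul _ hsl (abs_nonneg _) (by norm_num)
          rw [abs_of_nonneg hrnn]; exact hrle
      _ = M * Cχ := by ring
  have intB : ∀ σ:ℝ, σ < 0 → MeasureTheory.IntegrableOn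
      (fun l : ℝ => l ^ (-2*σ) * s l * χ l / l) (Set.Ico δ 1) := by
    intro σ hσ
    apply Integrable.mono' (g := fun _ : ℝ => M * Cχ / δ)
      (integrableOn_const measure_Ico_lt_top.ne)
      ((hcontB σ).aestronglyMeasurable measurableSet_Ico)
    rw [ae_restrict_iff' measurableSet_Ico]
    exact ae_of_all _ (hboundB σ hσ)
  -- pointwise decomposition on (0, δ)
  have hpt : ∀ σ:ℝ, ∀ l ∈ Set.Ioo (0:ℝ) δ, l ^ (-2*σ) * s l * χ l / l
      = l ^ (-2*σ) * ((s l - Real.pi / Real.log (1/l)) / l)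
        + Real.pi * (l ^ (-2*σ - 1) / Real.log (1/l)) := by
    intro σ l hl
    rw [hχone l hl, Real.rpow_sub_one (ne_of_gt hl.1)]
    have hlog : Real.log l ≠ 0 := by
      have := hlogne l hl
      rw [one_div, Real.log_inv] at this
      exact fun h => this (by rw [h, neg_zero])
    have hl0 : l ≠ 0 := ne_of_gt hl.1
    simp only [one_div, Real.log_inv]
    field_simp [hlog, hl0]
    ring
  set A : ℝ → ℝ :=
    fun σ => ∫ l in Set.Ioo (0:ℝ) δ, l ^ (-2*σ) * ((s l - Real.pi / Real.log (1/l)) / l)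
    with hAdef
  set Bf : ℝ → ℝ := fun σ => ∫ l in Set.Ico δ 1, l ^ (-2*σ) * s l * χ l / l with hBdef
  set G : ℝ → ℝ := fun σ => ∫ l in Set.Ioo (0:ℝ) δ, l ^ (-2*σ - 1) / Real.log (1/l) with hGdef
  have hsplit : ∀ σ:ℝ, σ < 0 → (∫ l in Set.Ioo (0:ℝ) 1, l ^ (-2*σ) * s l * χ l / l)
      = A σ + Real.pi * G σ + Bf σ := by
    intro σ hσ
    have hunion : Set.Ioo (0:ℝ) δ ∪ Set.Ico δ 1 = Set.Ioo (0:ℝ) 1 :=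
      Set.Ioo_union_Ico_eq_Ioo hδpos hδ1.le
    have hdisj : Disjoint (Set.Ioo (0:ℝ) δ) (Set.Ico δ 1) := by
      apply Set.disjoint_left.mpr
      intro l h1 h2
      exact absurd h1.2 (not_lt.mpr h2.1)
    have hIoo : MeasureTheory.IntegrableOn
        (fun l : ℝ => l ^ (-2*σ) * s l * χ l / l) (Set.Ioo 0 δ) := by
      exact MeasureTheory.IntegrableOn.congr_fun
        ((intA σ hσ).add ((intG hδpos hδ1 hσ).const_mul Real.pi))
        (fun l hl => (hpt σ l hl).symm) measurableSet_Ioo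
    rw [← hunion, MeasureTheory.setIntegral_union hdisj measurableSet_Ico hIoo (intB σ hσ)]
    have h1 : ∫ l in Set.Ioo (0:ℝ) δ, l ^ (-2*σ) * s l * χ l / l
        = A σ + Real.pi * G σ := by
      rw [MeasureTheory.setIntegral_congr_fun measurableSet_Ioo (fun l hl => hpt σ l hl),
        MeasureTheory.integral_add (intA σ hσ) ((intG hδpos hδ1 hσ).const_mul Real.pi),
        MeasureTheory.integral_const_mul]
    rw [h1]
  have hkey : ∀ σ:ℝ, σ < 0 → Z σ / σ - Real.log (-σ)
      = -(A σ + Bf σ)/Real.pi - (G σ + Real.log (-σ)) := by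
    intro σ hσ
    rw [hZ σ hσ, hsplit σ hσ]
    have hσ0 : σ ≠ 0 := ne_of_lt hσ
    field_simp
    ring
  -- limits
  have tendA : Filter.Tendsto A (nhdsWithin 0 (Set.Iio 0))
      (nhds (∫ l in Set.Ioo (0:ℝ) δ, (s l - Real.pi / Real.log (1/l)) / l)) := by
    apply MeasureTheory.tendsto_integral_filter_of_dominated_convergence
      (bound := fun l => C * (1/(l * Real.log (1/l)^2)))
    · exact Filter.Eventually.of_forall fun σ =>
        ((hcontA σ).aestronglyMeasurable measurableSet_Ioo)
    · filter_upwards [eventually_mem_nhdsWithin] with σ hσ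
      rw [ae_restrict_iff' measurableSet_Ioo]
      exact ae_of_all _ (hboundA σ hσ)
    · exact hDint
    · rw [ae_restrict_iff' measurableSet_Ioo]
      apply ae_of_all
      intro l hl
      have := (tendsto_rpow_exp hl.1).mul_const ((s l - Real.pi / Real.log (1/l)) / l)
      simpa using this
  have tendB : Filter.Tendsto Bf (nhdsWithin 0 (Set.Iio 0))
      (nhds (∫ l in Set.Ico δ 1, s l * χ l / l)) := by
    apply MeasureTheory.tendsto_integral_filter_of_dominated_convergence
      (bound := fun _ => M * Cχ / δ)
    · exact Filter.Eventually.of_forall fun σ =>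
        ((hcontB σ).aestronglyMeasurable measurableSet_Ico)
    · filter_upwards [eventually_mem_nhdsWithin] with σ hσ
      rw [ae_restrict_iff' measurableSet_Ico]
      exact ae_of_all _ (hboundB σ hσ)
    · exact integrableOn_const measure_Ico_lt_top.ne
    · rw [ae_restrict_iff' measurableSet_Ico]
      apply ae_of_all
      intro l hl
      have hl0 : 0 < l := lt_of_lt_of_le hδpos hl.1
      have := (((tendsto_rpow_exp hl0).mul_const (s l)).mul_const (χ l)).div_const l
      simpa using this
  obtain ⟨L, tendG⟩ := G_limit hδpos hδ1
  refine ⟨-((∫ l in Set.Ioo (0:ℝ) δ, (s l - Real.pi / Real.log (1/l)) / l)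
      + (∫ l in Set.Ico δ 1, s l * χ l / l))/Real.pi - L, ?_⟩
  have hcomb := ((tendA.add tendB).neg.div_const Real.pi).sub tendG
  apply Filter.Tendsto.congr' _ hcomb
  filter_upwards [eventually_mem_nhdsWithin] with σ hσ
  exact (hkey σ hσ).symm
end

section
/- Let v : ℝ² → ℝ be a smooth function with compact support. For x > 0 define F(x) := ∫₀^∞ v(t, x/t) dt/t. Then lim_{x→0⁺} [ F(x) − v(0,0) log(1/x) ] = HR∫₀^∞ v(t, 0) dt/t + HR∫₀^∞ v(0, t) dt/t. -/
open MeasureTheory Set Filter Real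

lemma aux_integrableOn {f : ℝ → ℝ} (hf : ContinuousOn f (Ioi 0))
    {R : ℝ} (hR : ∀ t, R < t → f t = 0) {ε : ℝ} (hε : 0 < ε) :
    IntegrableOn f (Ioi ε) := by
  set M := max ε R with hM
  have h1 : IntegrableOn f (Ioc ε M) := by
    have : IntegrableOn f (Icc ε M) :=
      (hf.mono (fun t ht => lt_of_lt_of_le hε ht.1)).integrableOn_Icc
    exact this.mono_set Ioc_subset_Icc_self
  have h2 : IntegrableOn f (Ioi M) :=
    (integrableOn_zero (μ := volume)).congr_fun
      (fun t ht => (hR t (lt_of_le_of_lt (le_max_right ε R) ht)).symm) measurableSet_Ioi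
  have := h1.union h2
  rwa [Ioc_union_Ioi_eq_Ioi (le_max_left ε R)] at this

lemma aux_HR {w : ℝ → ℝ} (hw : Continuous w) {R : ℝ} (hR : ∀ t, R < t → w t = 0)
    {L : ℝ} (hL : 0 ≤ L) (hlip : ∀ t, 0 < t → |w t - w 0| ≤ L * t) :
    Tendsto (fun ε => (∫ t in Ioi ε, w t / t) - w 0 * Real.log (1/ε)) (nhdsWithin 0 (Ioi 0))
      (nhds ((∫ t in Ioc (0:ℝ) 1, (w t - w 0)/t) + ∫ t in Ioi (1:ℝ), w t / t)) := by
  set g : ℝ → ℝ := fun t => (w t - w 0)/t with hg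
  have hwc : ContinuousOn (fun t => w t / t) (Ioi (0:ℝ)) :=
    hw.continuousOn.div continuousOn_id (fun t ht => ne_of_gt ht)
  have hwz : ∀ t, R < t → w t / t = 0 := fun t ht => by rw [hR t ht, zero_div]
  have hgmeas : Measurable g :=
    (hw.measurable.sub measurable_const).div measurable_id
  have hgbound : ∀ t ∈ Ioc (0:ℝ) 1, ‖g t‖ ≤ L := by
    intro t ht
    rw [hg, Real.norm_eq_abs, abs_div, abs_of_pos ht.1, div_le_iff₀ ht.1]
    exact hlip t ht.1
  have hgint1 : IntegrableOn g (Ioc (0:ℝ) 1) := by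
    refine Integrable.mono' (integrableOn_const (C := L) measure_Ioc_lt_top.ne)
      hgmeas.aestronglyMeasurable ?_
    exact (ae_restrict_iff' measurableSet_Ioc).2 (ae_of_all _ hgbound)
  have hgint : ∀ δ : ℝ, δ ≤ 1 → IntegrableOn g (Ioc 0 δ) := fun δ hδ =>
    hgint1.mono_set (Ioc_subset_Ioc_right hδ)
  -- eventual identity
  have key : ∀ ε ∈ Ioo (0:ℝ) 1,
      (∫ t in Ioi ε, w t / t) - w 0 * Real.log (1/ε)
        = ((∫ t in Ioc (0:ℝ) 1, g t) - ∫ t in Ioc (0:ℝ) ε, g t) + ∫ t in Ioi (1:ℝ), w t / t := by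
    intro ε hε
    have hε0 := hε.1
    have hε1 := hε.2
    have hint1 : IntegrableOn (fun t => w t / t) (Ioc ε 1) :=
      (aux_integrableOn hwc hwz hε0).mono_set Ioc_subset_Ioi_self
    have hint2 : IntegrableOn (fun t => w t / t) (Ioi (1:ℝ)) :=
      aux_integrableOn hwc hwz one_pos
    have split1 : (∫ t in Ioi ε, w t / t)
        = (∫ t in Ioc ε 1, w t / t) + ∫ t in Ioi (1:ℝ), w t / t := by
      rw [← setIntegral_union (Ioc_disjoint_Ioi le_rfl) measurableSet_Ioi hint1 hint2,
        Ioc_union_Ioi_eq_Ioi hε1.le]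
    have hinv : IntegrableOn (fun t : ℝ => w 0 / t) (Ioc ε 1) := by
      have : ContinuousOn (fun t : ℝ => w 0 / t) (Icc ε 1) :=
        continuousOn_const.div continuousOn_id
          (fun t ht => ne_of_gt (lt_of_lt_of_le hε0 ht.1))
      exact this.integrableOn_Icc.mono_set Ioc_subset_Icc_self
    have hgε1 : IntegrableOn g (Ioc ε 1) := hgint1.mono_set (Ioc_subset_Ioc_left hε0.le)
    have hid : (∫ t in Ioc ε 1, w t / t) = (∫ t in Ioc ε 1, g t) + w 0 * Real.log (1/ε) := by
      have hptw : ∀ t ∈ Ioc ε 1, w t / t = g t + w 0 / t := by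
        intro t ht
        have ht0 : t ≠ 0 := ne_of_gt (hε0.trans ht.1)
        rw [hg]
        field_simp
        ring
      rw [setIntegral_congr_fun measurableSet_Ioc hptw, integral_add hgε1 hinv]
      congr 1
      have : (∫ t in Ioc ε 1, w 0 / t) = w 0 * ∫ t in Ioc ε 1, t⁻¹ := by
        simp_rw [div_eq_mul_inv]
        exact integral_const_mul _ _
      rw [this, ← intervalIntegral.integral_of_le hε1.le,
        integral_inv_of_pos hε0 one_pos]
    have hsplit2 : (∫ t in Ioc ε 1, g t) = (∫ t in Ioc (0:ℝ) 1, g t) - ∫ t in Ioc (0:ℝ) ε, g t := by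
      have hu : (∫ t in Ioc (0:ℝ) ε, g t) + (∫ t in Ioc ε 1, g t) = ∫ t in Ioc (0:ℝ) 1, g t := by
        rw [← setIntegral_union (Set.Ioc_disjoint_Ioc_of_le le_rfl) measurableSet_Ioc
          (hgint ε hε1.le) hgε1, Ioc_union_Ioc_eq_Ioc hε0.le hε1.le]
      linarith
    rw [split1, hid, hsplit2]
    ring
  have T : Tendsto (fun ε : ℝ => ∫ t in Ioc (0:ℝ) ε, g t) (nhdsWithin 0 (Ioi 0)) (nhds 0) := by
    apply squeeze_zero_norm' (f := fun ε : ℝ => ∫ t in Ioc (0:ℝ) ε, g t) (a := fun ε : ℝ => L * ε)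
    · filter_upwards [Ioo_mem_nhdsGT_of_mem (⟨le_rfl, one_pos⟩ : (0:ℝ) ∈ Ico (0:ℝ) 1)]
        with ε hε
      have hb : ∀ t ∈ Ioc (0:ℝ) ε, ‖g t‖ ≤ L := fun t ht =>
        hgbound t ⟨ht.1, ht.2.trans hε.2.le⟩
      calc ‖∫ t in Ioc (0:ℝ) ε, g t‖ ≤ L * (volume (Ioc (0:ℝ) ε)).toReal :=
            norm_setIntegral_le_of_norm_le_const (by simp [Real.volume_Ioc]) hb
        _ = L * ε := by rw [Real.volume_Ioc]; simp [hε.1.le]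
    · have : Tendsto (fun ε : ℝ => L * ε) (nhds 0) (nhds (L * 0)) :=
        (continuous_const.mul continuous_id).tendsto 0
      simpa using this.mono_left nhdsWithin_le_nhds
  have heq : (fun ε : ℝ => ((∫ t in Ioc (0:ℝ) 1, g t) - ∫ t in Ioc (0:ℝ) ε, g t)
        + ∫ t in Ioi (1:ℝ), w t / t)
      =ᶠ[nhdsWithin 0 (Ioi 0)]
      (fun ε => (∫ t in Ioi ε, w t / t) - w 0 * Real.log (1/ε)) := by
    filter_upwards [Ioo_mem_nhdsGT_of_mem (⟨le_rfl, one_pos⟩ : (0:ℝ) ∈ Ico (0:ℝ) 1)]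
      with ε hε using (key ε hε).symm
  refine Tendsto.congr' heq ?_
  simpa using (tendsto_const_nhds.sub T).add (tendsto_const_nhds
    (x := ∫ t in Ioi (1:ℝ), w t / t))

lemma aux_diff_bound {f g : ℝ → ℝ} {s L x : ℝ} (hs : 0 < s) (hx : s * s = x)
    (hL : 0 ≤ L)
    (hf : IntegrableOn f (Ioi s)) (hg : IntegrableOn g (Ioi s))
    (hb : ∀ t ∈ Ioi s, |f t - g t| ≤ L * x / t ^ 2) :
    |(∫ t in Ioi s, f t) - ∫ t in Ioi s, g t| ≤ L * s := by
  have hx0 : 0 < x := hx ▸ mul_pos hs hs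
  rw [← integral_sub hf hg]
  have hbint : IntegrableOn (fun t : ℝ => L * x * t ^ (-2 : ℝ)) (Ioi s) :=
    (integrableOn_Ioi_rpow_of_lt (by norm_num) hs).const_mul (L * x)
  have hbval : (∫ t in Ioi s, L * x * t ^ (-2 : ℝ)) = L * s := by
    rw [integral_const_mul, integral_Ioi_rpow_of_lt (by norm_num) hs]
    rw [show (-2 : ℝ) + 1 = -1 by norm_num, Real.rpow_neg_one]
    field_simp
    nlinarith [hx]
  calc |∫ t in Ioi s, (f t - g t)| ≤ ∫ t in Ioi s, L * x * t ^ (-2 : ℝ) := by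
        rw [← Real.norm_eq_abs]
        apply norm_integral_le_of_norm_le hbint
        refine (ae_restrict_iff' measurableSet_Ioi).2 (ae_of_all _ ?_)
        intro t ht
        have ht0 : 0 < t := hs.trans ht
        rw [Real.norm_eq_abs, Real.rpow_neg ht0.le, show (2:ℝ) = ((2:ℕ):ℝ) by norm_num,
          Real.rpow_natCast]
        calc |f t - g t| ≤ L * x / t ^ 2 := hb t ht
          _ = L * x * (t ^ 2)⁻¹ := by ring
    _ = L * s := hbval

/-- Special case of the pushforward theorem: for `v` smooth of compact support on `ℝ²`
and `F(x) = ∫₀^∞ v(t, x/t) dt/t`, one has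
`lim_{x→0⁺} (F(x) - v(0,0) log(1/x)) = HR∫₀^∞ v(t,0) dt/t + HR∫₀^∞ v(0,t) dt/t`. -/
theorem pushforward_constant_term
    (v : ℝ × ℝ → ℝ) (hv : ContDiff ℝ (⊤ : ℕ∞) v) (hsupp : HasCompactSupport v)
    (F : ℝ → ℝ)
    (hF : ∀ x > (0 : ℝ), F x = ∫ t in Set.Ioi (0 : ℝ), v (t, x / t) / t) :
    ∃ I₁ I₂ : ℝ,
      Filter.Tendsto
        (fun ε : ℝ => (∫ t in Set.Ioi ε, v (t, 0) / t) - v (0, 0) * Real.log (1 / ε))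
        (nhdsWithin 0 (Set.Ioi 0)) (nhds I₁) ∧
      Filter.Tendsto
        (fun ε : ℝ => (∫ t in Set.Ioi ε, v (0, t) / t) - v (0, 0) * Real.log (1 / ε))
        (nhdsWithin 0 (Set.Ioi 0)) (nhds I₂) ∧
      Filter.Tendsto (fun x : ℝ => F x - v (0, 0) * Real.log (1 / x))
        (nhdsWithin 0 (Set.Ioi 0)) (nhds (I₁ + I₂)) := by
  -- Lipschitz bound
  obtain ⟨C, hC⟩ := (hv.continuous_fderiv (by simp)).bounded_above_of_compact_support (hsupp.fderiv ℝ)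
  set L : ℝ := max C 0 with hLdef
  have hL : 0 ≤ L := le_max_right _ _
  have hlipW : LipschitzWith L.toNNReal v := by
    apply lipschitzWith_of_nnnorm_fderiv_le (hv.differentiable (by simp))
    intro p
    rw [← NNReal.coe_le_coe, coe_nnnorm, Real.coe_toNNReal _ hL]
    exact (hC p).trans (le_max_left _ _)
  have hlip : ∀ p q : ℝ × ℝ, |v p - v q| ≤ L * ‖p - q‖ := by
    intro p q
    have := hlipW.dist_le_mul p q
    rwa [Real.dist_eq, dist_eq_norm, Real.coe_toNNReal _ hL] at this
  -- support radius
  obtain ⟨R, hRsub⟩ := hsupp.isBounded.subset_closedBall (0 : ℝ × ℝ)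
  have hz : ∀ p : ℝ × ℝ, R < ‖p‖ → v p = 0 := by
    intro p hp
    apply image_eq_zero_of_notMem_tsupport
    intro hmem
    have := hRsub hmem
    rw [mem_closedBall_zero_iff] at this
    linarith
  have hz1 : ∀ a b : ℝ, R < a → v (a, b) = 0 := fun a b h =>
    hz _ (h.trans_le ((le_abs_self a).trans (norm_fst_le ((a, b) : ℝ × ℝ))))
  have hz2 : ∀ a b : ℝ, R < b → v (a, b) = 0 := fun a b h =>
    hz _ (h.trans_le ((le_abs_self b).trans (norm_snd_le ((a, b) : ℝ × ℝ))))
  -- the two HR integrals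
  have hw1c : Continuous (fun t : ℝ => v (t, 0)) :=
    hv.continuous.comp (continuous_id.prodMk continuous_const)
  have hw2c : Continuous (fun t : ℝ => v (0, t)) :=
    hv.continuous.comp (continuous_const.prodMk continuous_id)
  have h1 : ∀ t : ℝ, 0 < t → |v (t, 0) - v (0, 0)| ≤ L * t := by
    intro t ht
    have h := hlip (t, 0) (0, 0)
    rw [show ((t, 0) : ℝ × ℝ) - (0, 0) = (t, 0) by simp,
      show ‖((t, 0) : ℝ × ℝ)‖ = t by simp [Prod.norm_def, abs_of_pos ht, ht.le]] at h
    exact h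
  have h2 : ∀ t : ℝ, 0 < t → |v (0, t) - v (0, 0)| ≤ L * t := by
    intro t ht
    have h := hlip (0, t) (0, 0)
    rw [show ((0, t) : ℝ × ℝ) - (0, 0) = (0, t) by simp,
      show ‖((0, t) : ℝ × ℝ)‖ = t by simp [Prod.norm_def, abs_of_pos ht, ht.le]] at h
    exact h
  have T₁ := aux_HR hw1c (fun t ht => hz1 t 0 ht) hL h1
  have T₂ := aux_HR hw2c (fun t ht => hz2 0 t ht) hL h2
  obtain ⟨I₁, T₁⟩ : ∃ I, Tendsto
      (fun ε : ℝ => (∫ t in Ioi ε, v (t, 0) / t) - v (0, 0) * Real.log (1 / ε))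
      (nhdsWithin 0 (Ioi 0)) (nhds I) := ⟨_, T₁⟩
  obtain ⟨I₂, T₂⟩ : ∃ I, Tendsto
      (fun ε : ℝ => (∫ t in Ioi ε, v (0, t) / t) - v (0, 0) * Real.log (1 / ε))
      (nhdsWithin 0 (Ioi 0)) (nhds I) := ⟨_, T₂⟩
  refine ⟨I₁, I₂, T₁, T₂, ?_⟩
  set G₁ : ℝ → ℝ := fun ε : ℝ => (∫ t in Ioi ε, v (t, 0) / t) - v (0, 0) * Real.log (1 / ε)
    with hG₁def
  set G₂ : ℝ → ℝ := fun ε : ℝ => (∫ t in Ioi ε, v (0, t) / t) - v (0, 0) * Real.log (1 / ε)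
    with hG₂def
  set E₁ : ℝ → ℝ := fun x => (∫ t in Ioi (Real.sqrt x), v (t, x / t) / t)
      - ∫ t in Ioi (Real.sqrt x), v (t, 0) / t with hE₁def
  set E₂ : ℝ → ℝ := fun x => (∫ u in Ioi (Real.sqrt x), v (x / u, u) / u)
      - ∫ u in Ioi (Real.sqrt x), v (0, u) / u with hE₂def
  have main : ∀ x ∈ Ioo (0:ℝ) 1,
      (F x - v (0, 0) * Real.log (1 / x)
        = E₁ x + E₂ x + G₁ (Real.sqrt x) + G₂ (Real.sqrt x))
      ∧ |E₁ x| ≤ L * Real.sqrt x ∧ |E₂ x| ≤ L * Real.sqrt x := by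
    intro x hx
    have hx0 : 0 < x := hx.1
    set s := Real.sqrt x with hsdef
    have hs : 0 < s := Real.sqrt_pos.mpr hx0
    have hss : s * s = x := Real.mul_self_sqrt hx0.le
    -- integrabilities
    have hcont1 : ContinuousOn (fun t : ℝ => v (t, x / t) / t) (Ioi 0) := by
      apply ContinuousOn.div _ continuousOn_id (fun t ht => ne_of_gt ht)
      exact hv.continuous.comp_continuousOn (continuousOn_id.prodMk
        (continuousOn_const.div continuousOn_id (fun t ht => ne_of_gt ht)))
    have hcont2 : ContinuousOn (fun u : ℝ => v (x / u, u) / u) (Ioi 0) := by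
      apply ContinuousOn.div _ continuousOn_id (fun t ht => ne_of_gt ht)
      exact hv.continuous.comp_continuousOn
        ((continuousOn_const.div continuousOn_id (fun t ht => ne_of_gt ht)).prodMk
          continuousOn_id)
    have intA' : IntegrableOn (fun t : ℝ => v (t, x / t) / t) (Ioi s) :=
      aux_integrableOn hcont1 (fun t ht => by rw [hz1 t _ ht, zero_div]) hs
    have hcontA : ContinuousOn (fun t : ℝ => v (t, 0) / t) (Ioi 0) := by
      exact ContinuousOn.div hw1c.continuousOn continuousOn_id (fun t ht => ne_of_gt ht)
    have intA : IntegrableOn (fun t : ℝ => v (t, 0) / t) (Ioi s) :=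
      aux_integrableOn hcontA (fun t ht => by rw [hz1 t 0 ht, zero_div]) hs
    have intB' : IntegrableOn (fun u : ℝ => v (x / u, u) / u) (Ioi s) :=
      aux_integrableOn hcont2 (fun u hu => by rw [hz2 _ u hu, zero_div]) hs
    have hcontB : ContinuousOn (fun u : ℝ => v (0, u) / u) (Ioi 0) := by
      exact ContinuousOn.div hw2c.continuousOn continuousOn_id (fun t ht => ne_of_gt ht)
    have intB : IntegrableOn (fun u : ℝ => v (0, u) / u) (Ioi s) :=
      aux_integrableOn hcontB (fun u hu => by rw [hz2 0 u hu, zero_div]) hs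
    -- pointwise bounds
    have bndA : ∀ t ∈ Ioi s, |v (t, x / t) / t - v (t, 0) / t| ≤ L * x / t ^ 2 := by
      intro t ht
      have ht0 : 0 < t := hs.trans ht
      have hd0 : 0 < x / t := div_pos hx0 ht0
      have h := hlip (t, x / t) (t, 0)
      have hnp : ‖((0, x / t) : ℝ × ℝ)‖ = x / t := by
        rw [Prod.norm_def]
        show ‖(0:ℝ)‖ ⊔ ‖x / t‖ = x / t
        rw [norm_zero, Real.norm_eq_abs, abs_of_pos hd0]
        exact sup_eq_right.mpr hd0.le
      rw [show ((t, x / t) : ℝ × ℝ) - (t, 0) = (0, x / t) by simp, hnp] at h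
      rw [div_sub_div_same, abs_div, abs_of_pos ht0]
      calc |v (t, x / t) - v (t, 0)| / t ≤ (L * (x / t)) / t := by gcongr
        _ = L * x / t ^ 2 := by rw [← mul_div_assoc, div_div, ← sq]
    have bndB : ∀ u ∈ Ioi s, |v (x / u, u) / u - v (0, u) / u| ≤ L * x / u ^ 2 := by
      intro u hu
      have hu0 : 0 < u := hs.trans hu
      have hd0 : 0 < x / u := div_pos hx0 hu0
      have h := hlip (x / u, u) (0, u)
      have hnp : ‖((x / u, 0) : ℝ × ℝ)‖ = x / u := by
        rw [Prod.norm_def]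
        show ‖x / u‖ ⊔ ‖(0:ℝ)‖ = x / u
        rw [norm_zero, Real.norm_eq_abs, abs_of_pos hd0]
        exact sup_eq_left.mpr hd0.le
      rw [show ((x / u, u) : ℝ × ℝ) - (0, u) = (x / u, 0) by simp, hnp] at h
      rw [div_sub_div_same, abs_div, abs_of_pos hu0]
      calc |v (x / u, u) - v (0, u)| / u ≤ (L * (x / u)) / u := by gcongr
        _ = L * x / u ^ 2 := by rw [← mul_div_assoc, div_div, ← sq]
    have errA : |E₁ x| ≤ L * s := by
      rw [hE₁def]
      exact aux_diff_bound hs hss hL intA' intA bndA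
    have errB : |E₂ x| ≤ L * s := by
      rw [hE₂def]
      exact aux_diff_bound hs hss hL intB' intB bndB
    -- change of variables
    have himg : (fun u : ℝ => x / u) '' Ioi s = Ioo 0 s := by
      ext y
      constructor
      · rintro ⟨u, hu, rfl⟩
        have hu0 : 0 < u := hs.trans hu
        refine ⟨div_pos hx0 hu0, ?_⟩
        rw [div_lt_iff₀ hu0]
        calc x = s * s := hss.symm
          _ < s * u := (mul_lt_mul_iff_right₀ hs).2 hu
      · intro hy
        have hy0 : 0 < y := hy.1
        refine ⟨x / y, ?_, ?_⟩
        · rw [mem_Ioi, lt_div_iff₀ hy0]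
          calc s * y < s * s := (mul_lt_mul_iff_right₀ hs).2 hy.2
            _ = x := hss
        · field_simp
    have hderiv : ∀ u ∈ Ioi s, HasDerivWithinAt (fun u : ℝ => x / u) (-(x / u ^ 2)) (Ioi s) u := by
      intro u hu
      have hu0 : u ≠ 0 := ne_of_gt (hs.trans hu)
      have := ((hasDerivAt_inv hu0).const_mul x).hasDerivWithinAt (s := Ioi s)
      simpa [div_eq_mul_inv] using this
    have hinj : InjOn (fun u : ℝ => x / u) (Ioi s) := by
      intro a ha b hb hab
      have ha0 : (0:ℝ) < a := hs.trans ha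
      have hb0 : (0:ℝ) < b := hs.trans hb
      simp only at hab
      field_simp at hab
      linarith
    have hptw : ∀ u ∈ Ioi s,
        |(-(x / u ^ 2))| • ((fun t : ℝ => v (t, x / t) / t) ((fun u : ℝ => x / u) u))
          = v (x / u, u) / u := by
      intro u hu
      have hu0 : 0 < u := hs.trans hu
      have hxu : x / (x / u) = u := by field_simp
      simp only [smul_eq_mul]
      rw [hxu, abs_neg, abs_of_pos (div_pos hx0 (pow_pos hu0 2))]
      field_simp
    have hCOV : (∫ t in Ioo 0 s, v (t, x / t) / t) = ∫ u in Ioi s, v (x / u, u) / u := by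
      rw [← himg, integral_image_eq_integral_abs_deriv_smul measurableSet_Ioi hderiv hinj]
      exact setIntegral_congr_fun measurableSet_Ioi hptw
    have hIooInt : IntegrableOn (fun t : ℝ => v (t, x / t) / t) (Ioo 0 s) := by
      rw [← himg,
        integrableOn_image_iff_integrableOn_abs_deriv_smul measurableSet_Ioi hderiv hinj]
      exact intB'.congr_fun (fun u hu => (hptw u hu).symm) measurableSet_Ioi
    have hIci : IntegrableOn (fun t : ℝ => v (t, x / t) / t) (Ici s) := by
      rw [integrableOn_Ici_iff_integrableOn_Ioi]; exact intA'
    have hdisj : Disjoint (Ioo (0:ℝ) s) (Ici s) :=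
      disjoint_left.mpr fun t ht hts => absurd ht.2 (not_lt.mpr hts)
    have hsplitF : F x = (∫ t in Ioo 0 s, v (t, x / t) / t) + ∫ t in Ioi s, v (t, x / t) / t := by
      rw [hF x hx0, ← Ioo_union_Ici_eq_Ioi hs,
        setIntegral_union hdisj measurableSet_Ici hIooInt hIci, integral_Ici_eq_integral_Ioi]
    have hlog : Real.log (1 / x) = 2 * Real.log (1 / s) := by
      rw [one_div, one_div, Real.log_inv, Real.log_inv, ← hss,
        Real.log_mul (ne_of_gt hs) (ne_of_gt hs)]
      ring
    refine ⟨?_, errA, errB⟩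
    rw [hE₁def, hE₂def, hG₁def, hG₂def]
    simp only
    rw [hsplitF, hCOV, hlog]
    ring
  -- assemble
  have hEV : Ioo (0:ℝ) 1 ∈ nhdsWithin (0:ℝ) (Ioi 0) :=
    Ioo_mem_nhdsGT_of_mem ⟨le_rfl, one_pos⟩
  have hsq : Tendsto Real.sqrt (nhdsWithin (0:ℝ) (Ioi 0)) (nhdsWithin (0:ℝ) (Ioi 0)) := by
    rw [tendsto_nhdsWithin_iff]
    constructor
    · exact (Real.continuous_sqrt.tendsto' 0 0 (by simp)).mono_left nhdsWithin_le_nhds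
    · filter_upwards [self_mem_nhdsWithin] with x hx using Real.sqrt_pos.mpr hx
  have tend0 : Tendsto (fun x : ℝ => L * Real.sqrt x) (nhdsWithin (0:ℝ) (Ioi 0)) (nhds 0) := by
    have h0 : Tendsto (fun x : ℝ => L * Real.sqrt x) (nhds 0) (nhds (L * Real.sqrt 0)) :=
      (continuous_const.mul Real.continuous_sqrt).tendsto 0
    simpa using h0.mono_left nhdsWithin_le_nhds
  have tE₁ : Tendsto E₁ (nhdsWithin (0:ℝ) (Ioi 0)) (nhds 0) := by
    apply squeeze_zero_norm' (a := fun x : ℝ => L * Real.sqrt x) ?_ tend0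
    filter_upwards [hEV] with x hx
    rw [Real.norm_eq_abs]
    exact (main x hx).2.1
  have tE₂ : Tendsto E₂ (nhdsWithin (0:ℝ) (Ioi 0)) (nhds 0) := by
    apply squeeze_zero_norm' (a := fun x : ℝ => L * Real.sqrt x) ?_ tend0
    filter_upwards [hEV] with x hx
    rw [Real.norm_eq_abs]
    exact (main x hx).2.2
  have tG₁ : Tendsto (fun x : ℝ => G₁ (Real.sqrt x)) (nhdsWithin (0:ℝ) (Ioi 0)) (nhds I₁) :=
    T₁.comp hsq
  have tG₂ : Tendsto (fun x : ℝ => G₂ (Real.sqrt x)) (nhdsWithin (0:ℝ) (Ioi 0)) (nhds I₂) :=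
    T₂.comp hsq
  have final := ((tE₁.add tE₂).add tG₁).add tG₂
  refine Tendsto.congr' ?_ (by simpa using final)
  filter_upwards [hEV] with x hx using ((main x hx).1).symm
end

section
/- For ν > 0 consider the tempered distribution on ℝ² given by the locally integrable function ξ ↦ 1/(|ξ|² + ν²), and let δ be the Dirac delta at the origin. Then 1/(|ξ|² + ν²) − 2π log(1/ν) δ converges in the space of tempered distributions S′(ℝ²) as ν → 0⁺; that is, for every Schwartz function φ on ℝ², the limit lim_{ν→0⁺} [ ∫_{ℝ²} φ(ξ)/(|ξ|² + ν²) dξ − 2π log(1/ν) φ(0) ] exists. -/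
/-!
Subtract from `φ` its first-order Taylor polynomial at `0`, cut off to the unit ball. The remainder
is `O(|ξ|²)` near `0` and bounded by `|φ|` outside the ball, so its quotient by `|ξ|² + ν²` is
dominated uniformly in `ν` and its integral converges as `ν → 0`. The linear term is odd and
integrates to zero, and in polar coordinates the constant term contributes
`φ(0) ∫_{|ξ| ≤ 1} (|ξ|² + ν²)⁻¹ dξ = π φ(0) (log (1 + ν²) - log ν²)`, whose divergent part is
exactly `2π log (1/ν) φ(0)`.
-/

open MeasureTheory Set Metric Filter Topology

theorem integral_eq_zero_of_odd {G E : Type*} [MeasurableSpace G] [AddGroup G] [MeasurableNeg G]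
    [NormedAddCommGroup E] [NormedSpace ℝ E] (μ : Measure G) [μ.IsNegInvariant] {f : G → E}
    (hf : f.Odd) : ∫ x, f x ∂μ = 0 := by
  have h := integral_neg_eq_self f μ
  simp only [hf _, integral_neg] at h
  rwa [neg_eq_iff_add_eq_zero, ← two_smul ℝ, smul_eq_zero, or_iff_right two_ne_zero] at h

theorem intervalIntegral_mul_inv_sq_add_sq {ν : ℝ} (hν : ν ≠ 0) (r : ℝ) :
    ∫ x in (0 : ℝ)..r, x * (x ^ 2 + ν ^ 2)⁻¹ =
      (Real.log (r ^ 2 + ν ^ 2) - Real.log (ν ^ 2)) / 2 := by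
  have hd : ∀ x : ℝ, x ^ 2 + ν ^ 2 ≠ 0 := fun x => by positivity
  have hderiv : ∀ x ∈ uIcc 0 r,
      HasDerivAt (fun x => Real.log (x ^ 2 + ν ^ 2) / 2) (x * (x ^ 2 + ν ^ 2)⁻¹) x :=
    fun x _ => ((((hasDerivAt_pow 2 x).add_const (ν ^ 2)).log (hd x)).div_const 2).congr_deriv
      (by field_simp; ring)
  rw [intervalIntegral.integral_eq_sub_of_hasDerivAt hderiv
    (Continuous.intervalIntegrable (by fun_prop (disch := exact hd _)) _ _)]
  simp [sub_div]

theorem setIntegral_closedBall_inv_normSq_add_sq {ν : ℝ} (hν : ν ≠ 0) {r : ℝ} (hr : 0 ≤ r) :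
    ∫ ξ : EuclideanSpace ℝ (Fin 2) in closedBall 0 r, (‖ξ‖ ^ 2 + ν ^ 2)⁻¹ =
      Real.pi * (Real.log (r ^ 2 + ν ^ 2) - Real.log (ν ^ 2)) := by
  set f : ℝ → ℝ := (Iic r).indicator fun s => (s ^ 2 + ν ^ 2)⁻¹
  have hradial : ∫ ξ : EuclideanSpace ℝ (Fin 2) in closedBall 0 r, (‖ξ‖ ^ 2 + ν ^ 2)⁻¹ =
      ∫ ξ : EuclideanSpace ℝ (Fin 2), f ‖ξ‖ := by
    rw [← integral_indicator measurableSet_closedBall]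
    congr 1 with ξ
    simp [f, indicator]
  have hpolar : ∫ s in Ioi (0 : ℝ), s ^ (2 - 1) • f s =
      ∫ s in (0 : ℝ)..r, s * (s ^ 2 + ν ^ 2)⁻¹ := by
    rw [intervalIntegral.integral_of_le hr, ← Ioi_inter_Iic,
      ← setIntegral_indicator measurableSet_Iic]
    congr 1 with s
    simp [f, indicator]
  rw [hradial, integral_fun_norm_addHaar, finrank_euclideanSpace_fin, hpolar,
    intervalIntegral_mul_inv_sq_add_sq hν]
  simp [measureReal_def, Real.pi_nonneg]
  ring

section

variable {E : Type*} [NormedAddCommGroup E] [MeasurableSpace E] [BorelSpace E]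

theorem integrable_div_normSq_add_sq {μ : Measure E} {f : E → ℝ} (hf : Integrable f μ)
    {ν : ℝ} (hν : ν ≠ 0) : Integrable (fun ξ => f ξ / (‖ξ‖ ^ 2 + ν ^ 2)) μ := by
  simp_rw [div_eq_inv_mul]
  refine hf.bdd_mul (c := (ν ^ 2)⁻¹) (by fun_prop) (ae_of_all _ fun ξ => ?_)
  rw [norm_inv, Real.norm_of_nonneg (by positivity)]
  gcongr
  exact le_add_of_nonneg_left (by positivity)

theorem setIntegral_closedBall_linear_mul_norm_eq_zero [NormedSpace ℝ E] (μ : Measure E)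
    [μ.IsNegInvariant] (L : E →L[ℝ] ℝ) (g : ℝ → ℝ) (r : ℝ) :
    ∫ ξ in closedBall 0 r, L ξ * g ‖ξ‖ ∂μ = 0 := by
  rw [← integral_indicator measurableSet_closedBall]
  refine integral_eq_zero_of_odd μ fun ξ => ?_
  simp only [indicator, mem_closedBall_zero_iff, norm_neg, map_neg, neg_mul]
  split_ifs <;> simp

end

namespace SchwartzMap

variable {E : Type*} [NormedAddCommGroup E] [NormedSpace ℝ E]

theorem exists_norm_sub_taylor_le {F : Type*} [NormedAddCommGroup F] [NormedSpace ℝ F]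
    (φ : 𝓢(E, F)) : ∃ C ≥ 0, ∀ x, ‖φ x - (φ 0 + fderiv ℝ φ 0 x)‖ ≤ C * ‖x‖ ^ 2 := by
  set C := SchwartzMap.seminorm ℝ 0 0 (fderivCLM ℝ E _ (fderivCLM ℝ E F φ))
  have hC : 0 ≤ C := apply_nonneg _ _
  have hlip : ∀ y, ‖fderiv ℝ φ y - fderiv ℝ φ 0‖ ≤ C * ‖y‖ := fun y => by
    simpa [fderivCLM_apply] using convex_univ.norm_image_sub_le_of_norm_fderiv_le
      (fun z _ => (fderivCLM ℝ E F φ).differentiableAt)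
      (fun z _ => by
        simpa [fderivCLM_apply] using norm_le_seminorm ℝ (fderivCLM ℝ E _ (fderivCLM ℝ E F φ)) z)
      (mem_univ 0) (mem_univ y)
  refine ⟨C, hC, fun x => ?_⟩
  have := (convex_closedBall (0 : E) ‖x‖).norm_image_sub_le_of_norm_fderiv_le'
    (f := φ) (φ := fderiv ℝ φ 0) (C := C * ‖x‖) (fun z _ => φ.differentiableAt)
    (fun z hz => (hlip z).trans (by gcongr; exact mem_closedBall_zero_iff.1 hz))
    (mem_closedBall_self (norm_nonneg x)) (mem_closedBall_zero_iff.2 le_rfl)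
  simpa [sub_sub, sq, mul_assoc] using this

noncomputable def ballTaylorRemainder (φ : 𝓢(E, ℝ)) (ξ : E) : ℝ :=
  φ ξ - (closedBall (0 : E) 1).indicator (fun ξ => φ 0 + fderiv ℝ φ 0 ξ) ξ

theorem exists_abs_ballTaylorRemainder_div_le (φ : 𝓢(E, ℝ)) :
    ∃ C, ∀ ν ξ, |φ.ballTaylorRemainder ξ / (‖ξ‖ ^ 2 + ν ^ 2)| ≤
      (closedBall (0 : E) 1).indicator (fun _ => C) ξ + |φ ξ| := by
  obtain ⟨C, hC0, hC⟩ := φ.exists_norm_sub_taylor_le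
  refine ⟨C, fun ν ξ => ?_⟩
  rw [abs_div, abs_of_nonneg (by positivity : 0 ≤ ‖ξ‖ ^ 2 + ν ^ 2)]
  by_cases hξ : ‖ξ‖ ≤ 1
  · have hball : ξ ∈ closedBall (0 : E) 1 := mem_closedBall_zero_iff.2 hξ
    rw [ballTaylorRemainder, indicator_of_mem hball, indicator_of_mem hball]
    refine (div_le_of_le_mul₀ (by positivity) hC0 ?_).trans
      (le_add_of_nonneg_right (abs_nonneg _))
    calc |φ ξ - (φ 0 + fderiv ℝ φ 0 ξ)| ≤ C * ‖ξ‖ ^ 2 := hC ξ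
      _ ≤ C * (‖ξ‖ ^ 2 + ν ^ 2) := by gcongr; exact le_add_of_nonneg_right (by positivity)
  · have hball : ξ ∉ closedBall (0 : E) 1 := fun h => hξ (mem_closedBall_zero_iff.1 h)
    rw [ballTaylorRemainder, indicator_of_notMem hball, indicator_of_notMem hball, sub_zero,
      zero_add]
    refine div_le_self (abs_nonneg _) ?_
    nlinarith [sq_nonneg ν]

variable [MeasurableSpace E] [BorelSpace E]

theorem measurable_ballTaylorRemainder (φ : 𝓢(E, ℝ)) : Measurable φ.ballTaylorRemainder :=
  φ.continuous.measurable.sub <|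
    (by fun_prop : Continuous fun ξ => φ 0 + fderiv ℝ φ 0 ξ).measurable.indicator
      measurableSet_closedBall

variable [FiniteDimensional ℝ E] (μ : Measure E) [μ.IsAddHaarMeasure]

theorem integral_div_normSq_add_sq_eq (φ : 𝓢(E, ℝ)) {ν : ℝ} (hν : ν ≠ 0) :
    ∫ ξ, φ ξ / (‖ξ‖ ^ 2 + ν ^ 2) ∂μ =
      ∫ ξ, φ.ballTaylorRemainder ξ / (‖ξ‖ ^ 2 + ν ^ 2) ∂μ +
        φ 0 * ∫ ξ in closedBall 0 1, (‖ξ‖ ^ 2 + ν ^ 2)⁻¹ ∂μ := by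
  have hd : ∀ ξ : E, ‖ξ‖ ^ 2 + ν ^ 2 ≠ 0 := fun ξ => by positivity
  have hint : ∀ c : E → ℝ, Continuous c →
      IntegrableOn (fun ξ => c ξ * (‖ξ‖ ^ 2 + ν ^ 2)⁻¹) (closedBall 0 1) μ := fun c hc =>
    (hc.mul ((by fun_prop : Continuous fun ξ : E => ‖ξ‖ ^ 2 + ν ^ 2).inv₀ hd)).continuousOn
      |>.integrableOn_compact (isCompact_closedBall 0 1)
  have hsplit : (fun ξ => φ.ballTaylorRemainder ξ / (‖ξ‖ ^ 2 + ν ^ 2)) = fun ξ =>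
      φ ξ / (‖ξ‖ ^ 2 + ν ^ 2) - (closedBall 0 1).indicator
        (fun ξ => (φ 0 + fderiv ℝ φ 0 ξ) * (‖ξ‖ ^ 2 + ν ^ 2)⁻¹) ξ := by
    ext ξ
    by_cases hξ : ξ ∈ closedBall (0 : E) 1 <;>
      simp [ballTaylorRemainder, hξ, sub_mul, div_eq_mul_inv]
  have hodd := setIntegral_closedBall_linear_mul_norm_eq_zero μ (fderiv ℝ φ 0)
    (fun s => (s ^ 2 + ν ^ 2)⁻¹) 1
  rw [hsplit, integral_sub (integrable_div_normSq_add_sq φ.integrable hν)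
    ((hint _ (by fun_prop)).integrable_indicator measurableSet_closedBall),
    integral_indicator measurableSet_closedBall]
  simp_rw [add_mul]
  rw [integral_add (hint _ continuous_const) (hint _ (fderiv ℝ φ 0).continuous),
    integral_const_mul, hodd]
  ring

theorem continuousAt_integral_ballTaylorRemainder_div (φ : 𝓢(E, ℝ)) :
    ContinuousAt (fun ν => ∫ ξ, φ.ballTaylorRemainder ξ / (‖ξ‖ ^ 2 + ν ^ 2) ∂μ) 0 := by
  obtain ⟨C, hC⟩ := φ.exists_abs_ballTaylorRemainder_div_le
  have hbound : Integrable (fun ξ => (closedBall (0 : E) 1).indicator (fun _ => C) ξ + |φ ξ|) μ :=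
    ((integrableOn_const (isCompact_closedBall 0 1).measure_lt_top.ne).integrable_indicator
      measurableSet_closedBall).add φ.integrable.abs
  refine continuousAt_of_dominated
    (Eventually.of_forall fun ν =>
      (φ.measurable_ballTaylorRemainder.div (by fun_prop)).aestronglyMeasurable)
    (Eventually.of_forall fun ν => ae_of_all _ (hC ν)) hbound (ae_of_all _ fun ξ => ?_)
  rcases eq_or_ne ξ 0 with rfl | hξ
  · simpa [ballTaylorRemainder] using continuousAt_const
  · exact continuousAt_const.div (by fun_prop) (by simpa using hξ)

end SchwartzMap

/-- `1/(|ξ|² + ν²) - 2π log(1/ν) δ` converges in `S'(ℝ²)` as `ν → 0⁺`: for every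
Schwartz function `φ` on `ℝ²`, the limit
`lim_{ν→0⁺} [ ∫ φ(ξ)/(|ξ|² + ν²) dξ - 2π log(1/ν) φ(0) ]` exists. -/
theorem resolvent_kernel_tempered_limit
    (φ : SchwartzMap (EuclideanSpace ℝ (Fin 2)) ℝ) :
    ∃ I : ℝ, Filter.Tendsto
      (fun ν : ℝ =>
        (∫ ξ, φ ξ / (‖ξ‖ ^ 2 + ν ^ 2)) - 2 * Real.pi * Real.log (1 / ν) * φ 0)
      (nhdsWithin 0 (Set.Ioi 0)) (nhds I) := by
  refine ⟨∫ ξ, φ.ballTaylorRemainder ξ / (‖ξ‖ ^ 2 + 0 ^ 2), ?_⟩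
  have hremainder := (φ.continuousAt_integral_ballTaylorRemainder_div volume).tendsto
  have hlog : Tendsto (fun ν : ℝ => φ 0 * Real.pi * Real.log (1 + ν ^ 2)) (𝓝 0) (𝓝 0) := by
    have : ContinuousAt (fun ν : ℝ => φ 0 * Real.pi * Real.log (1 + ν ^ 2)) 0 := by
      fun_prop (disch := norm_num)
    simpa using this.tendsto
  rw [← add_zero (∫ ξ, _)]
  refine ((hremainder.add hlog).mono_left nhdsWithin_le_nhds).congr' ?_
  filter_upwards [self_mem_nhdsWithin] with ν (hν : 0 < ν)
  rw [φ.integral_div_normSq_add_sq_eq volume hν.ne',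
    setIntegral_closedBall_inv_normSq_add_sq hν.ne' zero_le_one, Real.log_pow, one_div,
    Real.log_inv, one_pow]
  ring
end
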